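/- arXiv:2507.14244 — 12 statements merged into one kernel-verified Lean document; each statement's English description precedes it below -/
import Mathlib

section
/- Let α be a positive real number that is not an integer. Then for every positive integer n, ⌊α⟨αn⟩⌋ ≤ f_α(n) ≤ ⌈α⟨αn⟩⌉, where ⟨x⟩ = x − ⌊x⌋ is the fractional part. -/
/-! Splitting `α n = ⌊α n⌋ + ⟨α n⟩` writes `α² n = x + y` with `x = α ⌊α n⌋` and
`y = α ⟨α n⟩`, so `f α n = ⌊x + y⌋ - ⌊x⌋`, and `⌊x⌋ + ⌊y⌋ ≤ ⌊x + y⌋ ≤ ⌊x⌋ + ⌈y⌉`. -/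

/-- `f α n = ⌊α² n⌋ - ⌊α ⌊α n⌋⌋` for a real parameter `α` and positive integer `n`. -/
noncomputable def f (α : ℝ) (n : ℕ) : ℤ :=
  ⌊α ^ 2 * (n : ℝ)⌋ - ⌊α * ((⌊α * (n : ℝ)⌋ : ℤ) : ℝ)⌋

/-- `Range (f_α) = {f_α(n) : n ∈ ℕ, n ≥ 1}`. -/
def Range (α : ℝ) : Set ℤ := {v : ℤ | ∃ n : ℕ, 1 ≤ n ∧ f α n = v}

theorem Int.floor_add_le_floor_add_ceil {R : Type*} [Ring R] [LinearOrder R]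
    [IsStrictOrderedRing R] [FloorRing R] (x y : R) : ⌊x + y⌋ ≤ ⌊x⌋ + ⌈y⌉ := by
  calc ⌊x + y⌋ ≤ ⌊x + (⌈y⌉ : R)⌋ := Int.floor_mono (add_le_add_right (Int.le_ceil y) x)
    _ = ⌊x⌋ + ⌈y⌉ := Int.floor_add_intCast x ⌈y⌉

theorem f_eq_floor_add_sub_floor (α : ℝ) (n : ℕ) :
    f α n = ⌊α * ⌊α * n⌋ + α * Int.fract (α * n)⌋ - ⌊α * ⌊α * n⌋⌋ := by
  rw [f, ← mul_add, Int.floor_add_fract, ← mul_assoc, sq]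

theorem stmt1_general (α : ℝ)
    (n : ℕ) :
    ⌊α * Int.fract (α * (n : ℝ))⌋ ≤ f α n ∧ f α n ≤ ⌈α * Int.fract (α * (n : ℝ))⌉ := by
  rw [f_eq_floor_add_sub_floor]
  have lower := Int.le_floor_add (α * ⌊α * n⌋) (α * Int.fract (α * n))
  have upper := Int.floor_add_le_floor_add_ceil (α * ⌊α * n⌋) (α * Int.fract (α * n))
  constructor <;> omega

theorem stmt1 (α : ℝ) (hα : 0 < α) (hni : ¬ ∃ m : ℤ, α = (m : ℝ))
    (n : ℕ) (hn : 1 ≤ n) :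
    ⌊α * Int.fract (α * (n : ℝ))⌋ ≤ f α n ∧ f α n ≤ ⌈α * Int.fract (α * (n : ℝ))⌉ :=
  stmt1_general α n
end

section
/- Let a ∈ ℕ and b ∈ ℕ with b ≥ 2 be relatively prime, and set α = a/b. Then Range(f_α) = {0} ∪ {f_α(r) : r ∈ ℤ, 1 ≤ r ≤ b² − 1}. -/
/-
Both `α p` and `α² p` are integers for `α = a / b` and `p = b²`, so shifting `n` by `p` adds the
same integer `α² p` to both floors in `f α n`. Hence `f_α` has period `b²`, every value is taken at
some residue `r < b²`, and the residue `0` contributes `f_α(b²) = f_α(0) = 0`.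
-/

lemma f_zero (α : ℝ) : f α 0 = 0 := by
  simp [f]

lemma f_periodic {α : ℝ} {p : ℕ} {m k : ℤ} (hm : α * p = m) (hk : α ^ 2 * p = k) :
    Function.Periodic (f α) p := by
  intro n
  have hmul : α * m = k := by rw [← hm, ← hk]; ring
  have hsq : α ^ 2 * ((n + p : ℕ) : ℝ) = α ^ 2 * n + k := by push_cast; rw [← hk]; ring
  have hlin : α * ((n + p : ℕ) : ℝ) = α * n + m := by push_cast; rw [← hm]; ring
  have hshift : ∀ j : ℤ, α * ((j + m : ℤ) : ℝ) = α * j + k := by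
    intro j; push_cast; rw [← hmul]; ring
  simp only [f, hsq, hlin, Int.floor_add_intCast, hshift]
  ring

lemma f_div_periodic (a b : ℕ) : Function.Periodic (f ((a : ℝ) / b)) (b ^ 2) := by
  rcases eq_or_ne b 0 with rfl | hb
  · simp
  refine f_periodic (m := a * b) (k := a ^ 2) ?_ ?_ <;>
    · push_cast; field_simp

theorem stmt3_general (a b : ℕ) (hb : 2 ≤ b) :
    Range ((a : ℝ) / (b : ℝ)) =
      {0} ∪ {v : ℤ | ∃ r : ℕ, 1 ≤ r ∧ r ≤ b ^ 2 - 1 ∧ f ((a : ℝ) / (b : ℝ)) r = v} := by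
  have hper := f_div_periodic a b
  have hb2 : 0 < b ^ 2 := by positivity
  ext v
  constructor
  · rintro ⟨n, -, rfl⟩
    rw [← hper.map_mod_nat n]
    rcases Nat.eq_zero_or_pos (n % b ^ 2) with h0 | hpos
    · left; rw [h0, f_zero]; rfl
    · exact Or.inr ⟨n % b ^ 2, hpos, by have := Nat.mod_lt n hb2; omega, rfl⟩
  · rintro (rfl | ⟨r, hr1, -, rfl⟩)
    · exact ⟨b ^ 2, hb2, by rw [hper.eq, f_zero]⟩
    · exact ⟨r, hr1, rfl⟩

theorem stmt3 (a b : ℕ) (ha : 0 < a) (hb : 2 ≤ b) (hab : Nat.Coprime a b) :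
    Range ((a : ℝ) / (b : ℝ)) =
      {0} ∪ {v : ℤ | ∃ r : ℕ, 1 ≤ r ∧ r ≤ b ^ 2 - 1 ∧ f ((a : ℝ) / (b : ℝ)) r = v} :=
  stmt3_general a b hb
end

section
/- Let α ∈ ℚ with 0 < α ≤ 1. The following dichotomy holds: (i) if α = 1/b with b ∈ ℕ, then Range(f_α) = {0}; (ii) if α = a/b with a, b ∈ ℕ relatively prime and 1 < a < b, then Range(f_α) = {0, 1}. -/
/-!
For `0 ≤ α ≤ 1` the two floors in `f α n` differ by at most one, since
`α² n - 1 ≤ α (α n - 1) ≤ α ⌊α n⌋ ≤ α² n`; so `Range α ⊆ {0, 1}`.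
For `α = a / b`, write `a n = q b + r` and `a q = s b + t` with `0 ≤ r, t < b`; then
`a² n = s b² + (t b + r a)`, so `f α n = ⌊(t b + r a) / b²⌋`. For `1 < a < b` coprime to `b`,
solving `a² n ≡ (b + a)(b - 1) (mod b²)` forces `r = t = b - 1`, and then the numerator
`(b + a)(b - 1)` lies in `[b², 2b²)`. The value `0` is attained whenever `α n` is an integer,
and `f (1 / b)` vanishes identically because `⌊⌊n / b⌋ / b⌋ = ⌊n / b²⌋`.
-/

theorem Int.floor_natCast_div_natCast {K : Type*} [Field K] [LinearOrder K]
    [IsStrictOrderedRing K] [FloorRing K] (m n : ℕ) :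
    ⌊(m : K) / n⌋ = ((m / n : ℕ) : ℤ) := by
  rw [← Nat.floor_div_eq_div (K := K), Int.natCast_floor_eq_floor (by positivity)]

theorem floor_natCast_div_mul_natCast (a b n : ℕ) :
    ⌊(a / b : ℝ) * n⌋ = ((a * n / b : ℕ) : ℤ) := by
  rw [div_mul_eq_mul_div, ← Nat.cast_mul, Int.floor_natCast_div_natCast]

theorem Nat.exists_pos_mul_modEq_of_coprime {k m : ℕ} (c : ℕ) (h : k.Coprime m) (hm : m ≠ 0) :
    ∃ n, 0 < n ∧ k * n ≡ c [MOD m] := by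
  obtain ⟨n, -, hn⟩ := Nat.exists_mul_mod_eq_of_coprime c h hm
  refine ⟨n + m, by omega, ?_⟩
  rw [Nat.ModEq, mul_add, mul_comm k m, Nat.add_mul_mod_self_left, hn]

theorem Nat.sq_mul_div_sq (a b n : ℕ) :
    a ^ 2 * n / b ^ 2 =
      a * (a * n / b) / b + (b * (a * (a * n / b) % b) + a * (a * n % b)) / b ^ 2 := by
  rcases Nat.eq_zero_or_pos b with rfl | hb
  · simp
  have hr := Nat.div_add_mod (a * n) b
  have ht := Nat.div_add_mod (a * (a * n / b)) b
  have hsplit : a ^ 2 * n =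
      b ^ 2 * (a * (a * n / b) / b) + (b * (a * (a * n / b) % b) + a * (a * n % b)) := by
    linear_combination a * hr.symm + b * ht.symm
  rw [hsplit, Nat.mul_add_div (by positivity)]

theorem f_nonneg (α : ℝ) (hα : 0 ≤ α) (n : ℕ) : 0 ≤ f α n := by
  rw [f, sub_nonneg]
  refine Int.floor_mono ?_
  calc α * ⌊α * n⌋ ≤ α * (α * n) := mul_le_mul_of_nonneg_left (Int.floor_le _) hα
    _ = α ^ 2 * n := by ring

theorem f_le_one (α : ℝ) (hα₀ : 0 ≤ α) (hα₁ : α ≤ 1) (n : ℕ) : f α n ≤ 1 := by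
  rw [f, sub_le_comm]
  refine Int.le_floor.2 ?_
  have h₁ := Int.floor_le (α ^ 2 * n)
  have h₂ := Int.lt_floor_add_one (α * n)
  push_cast
  nlinarith

theorem f_eq_zero_or_eq_one (α : ℝ) (hα₀ : 0 ≤ α) (hα₁ : α ≤ 1) (n : ℕ) :
    f α n = 0 ∨ f α n = 1 := by
  have := f_nonneg α hα₀ n
  have := f_le_one α hα₀ hα₁ n
  omega

theorem f_one_div (b n : ℕ) : f (1 / b) n = 0 := by
  have hfloor (d m : ℕ) : ⌊(1 / d : ℝ) * m⌋ = ((m / d : ℕ) : ℤ) := by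
    simpa using floor_natCast_div_mul_natCast 1 d m
  have hsq : (1 / b : ℝ) ^ 2 = 1 / ((b ^ 2 : ℕ) : ℝ) := by push_cast; ring
  rw [f, hsq, hfloor, hfloor, Int.cast_natCast, hfloor, Nat.div_div_eq_div_mul, sq, sub_self]

theorem f_eq_zero_of_mul_eq_intCast {α : ℝ} {n : ℕ} {m : ℤ} (h : α * n = m) :
    f α n = 0 := by
  rw [f, h, Int.floor_intCast, ← h, sub_eq_zero]
  ring_nf

theorem f_div_eq (a b n : ℕ) :
    f (a / b) n = ((b * (a * (a * n / b) % b) + a * (a * n % b)) / b ^ 2 : ℕ) := by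
  have hsq : ((a : ℝ) / b) ^ 2 = ((a ^ 2 : ℕ) : ℝ) / ((b ^ 2 : ℕ) : ℝ) := by
    push_cast; ring
  rw [f, hsq, floor_natCast_div_mul_natCast, floor_natCast_div_mul_natCast, Int.cast_natCast,
    floor_natCast_div_mul_natCast, Nat.sq_mul_div_sq]
  push_cast
  ring

theorem mod_eq_pred_of_sq_mul_modEq {a b n : ℕ} (hab : a.Coprime b) (hb : 0 < b)
    (h : a ^ 2 * n ≡ (b + a) * (b - 1) [MOD b ^ 2]) :
    a * n % b = b - 1 ∧ a * (a * n / b) % b = b - 1 := by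
  have hpred : (b - 1) % b = b - 1 := Nat.mod_eq_of_lt (by omega)
  rw [show (b + a) * (b - 1) = b * (b - 1) + a * (b - 1) by ring] at h
  have hr : a * n ≡ b - 1 [MOD b] := by
    refine Nat.ModEq.cancel_left_of_coprime (Nat.coprime_comm.1 hab) ?_
    calc a * (a * n) = a ^ 2 * n := by ring
      _ ≡ b * (b - 1) + a * (b - 1) [MOD b] := h.of_dvd (Dvd.intro_left b (sq b).symm)
      _ ≡ a * (b - 1) [MOD b] := Nat.mul_add_mod_self_left _ _ _
  have ht : a * (a * n / b) ≡ b - 1 [MOD b] := by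
    refine Nat.ModEq.mul_left_cancel' hb.ne' (Nat.ModEq.add_right_cancel' (a * (b - 1)) ?_)
    have hsplit : a ^ 2 * n = b * (a * (a * n / b)) + a * (b - 1) := by
      have := Nat.div_add_mod (a * n) b
      rw [(hr : a * n % b = (b - 1) % b), hpred] at this
      linear_combination a * this.symm
    rwa [← sq, ← hsplit]
  exact ⟨Eq.trans hr hpred, Eq.trans ht hpred⟩

theorem exists_f_div_eq_one {a b : ℕ} (hab : a.Coprime b) (ha : 1 < a) (hb : a < b) :
    ∃ n, 1 ≤ n ∧ f (a / b) n = 1 := by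
  obtain ⟨n, hn, hmod⟩ :=
    Nat.exists_pos_mul_modEq_of_coprime ((b + a) * (b - 1)) (hab.pow 2 2)
      (pow_ne_zero 2 (by omega))
  obtain ⟨hr, ht⟩ := mod_eq_pred_of_sq_mul_modEq hab (by omega) hmod
  refine ⟨n, hn, ?_⟩
  obtain ⟨k, rfl⟩ : ∃ k, b = k + 1 := ⟨b - 1, by omega⟩
  have hone : ((k + 1) * k + a * k) / (k + 1) ^ 2 = 1 :=
    Nat.div_eq_of_lt_le (by nlinarith) (by nlinarith)
  rw [f_div_eq, hr, ht, Nat.add_sub_cancel, hone, Nat.cast_one]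

theorem stmt6 :
    (∀ b : ℕ, 1 ≤ b → Range (1 / (b : ℝ)) = {0}) ∧
    (∀ a b : ℕ, Nat.Coprime a b → 1 < a → a < b →
      Range ((a : ℝ) / (b : ℝ)) = {0, 1}) := by
  refine ⟨fun b _ => ?_, fun a b hab ha hb => ?_⟩
  · refine Set.eq_singleton_iff_unique_mem.2 ⟨⟨1, le_rfl, f_one_div b 1⟩, ?_⟩
    rintro _ ⟨n, -, rfl⟩
    exact f_one_div b n
  · refine subset_antisymm ?_ (Set.insert_subset_iff.2 ⟨?_, Set.singleton_subset_iff.2 ?_⟩)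
    · rintro _ ⟨n, -, rfl⟩
      have hα₁ : (a / b : ℝ) ≤ 1 :=
        div_le_one_of_le₀ (by exact_mod_cast hb.le) (by positivity)
      exact f_eq_zero_or_eq_one _ (by positivity) hα₁ n
    · refine ⟨b, by omega, f_eq_zero_of_mul_eq_intCast (m := a) ?_⟩
      push_cast
      exact div_mul_cancel₀ _ (by exact_mod_cast (show b ≠ 0 by omega))
    · exact exists_f_div_eq_one hab ha hb
end

section
/- Let b ∈ ℕ with b ≥ 2, s ∈ ℕ ∪ {0}, u ∈ ℤ with 0 ≤ u ≤ b−1, and a ∈ ℤ with 1 ≤ a ≤ b−1. Then for every positive integer n, f_{sb + u + a/b}(n) = s·φ_{a,b}(n) + f_{u + a/b}(n), where φ_{a,b}(n) = na − ⌊na/b⌋·b. -/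
/-! If `k ∈ ℤ` and `k β ∈ ℤ`, the shift `β ↦ β + k` passes through every floor in `f`, leaving
`f (β + k) n - f β n = k β n - k ⌊β n⌋ = k · fract (β n)`. For `β = u + a / b` and `k = s b` one has
`b · fract (β n) = φ_{a,b}(n)`. -/

theorem f_add_intCast {β : ℝ} {k m : ℤ} (h : (k : ℝ) * β = m) (n : ℕ) :
    f (β + k) n = f β n + (m * n - k * ⌊β * n⌋) := by
  have hsq : (β + k) ^ 2 * n = β ^ 2 * n + ((2 * m * n + k ^ 2 * n : ℤ) : ℝ) := by
    push_cast
    linear_combination (2 * n : ℝ) * h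
  have hlin : ⌊(β + k) * n⌋ = ⌊β * n⌋ + k * n := by
    rw [show (β + k) * n = β * n + ((k * n : ℤ) : ℝ) by push_cast; ring, Int.floor_add_intCast]
  have hnested : (β + k) * ((⌊β * n⌋ + k * n : ℤ) : ℝ) =
      β * ⌊β * n⌋ + ((m * n + k * ⌊β * n⌋ + k ^ 2 * n : ℤ) : ℝ) := by
    push_cast
    linear_combination (n : ℝ) * h
  rw [f, f, hsq, hlin, hnested, Int.floor_add_intCast, Int.floor_add_intCast]
  ring

theorem stmt8_general (b : ℕ) (hb : 2 ≤ b) (s : ℕ) (u a : ℤ)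
    (n : ℕ) :
    f ((s : ℝ) * (b : ℝ) + (u : ℝ) + (a : ℝ) / (b : ℝ)) n =
      (s : ℤ) * ((n : ℤ) * a - ⌊((n : ℝ) * (a : ℝ)) / (b : ℝ)⌋ * (b : ℤ)) +
        f ((u : ℝ) + (a : ℝ) / (b : ℝ)) n := by
  have hb0 : (b : ℝ) ≠ 0 := by
    have : 0 < b := by omega
    positivity
  set β : ℝ := (u : ℝ) + (a : ℝ) / (b : ℝ)
  have hα : (s : ℝ) * b + u + a / b = β + ((s * b : ℤ) : ℝ) := by
    push_cast
    ring
  have hkβ : ((s * b : ℤ) : ℝ) * β = ((s * (b * u + a) : ℤ) : ℝ) := by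
    simp only [β]
    push_cast
    field_simp
  have hfloor : ⌊β * n⌋ = u * n + ⌊(n : ℝ) * a / b⌋ := by
    rw [show β * n = ((u * n : ℤ) : ℝ) + n * a / b by push_cast; ring, Int.floor_intCast_add]
  rw [hα, f_add_intCast hkβ, hfloor]
  ring

theorem stmt8 (b : ℕ) (hb : 2 ≤ b) (s : ℕ) (u a : ℤ)
    (hu0 : 0 ≤ u) (hu1 : u ≤ (b : ℤ) - 1) (ha0 : 1 ≤ a) (ha1 : a ≤ (b : ℤ) - 1)
    (n : ℕ) (hn : 1 ≤ n) :
    f ((s : ℝ) * (b : ℝ) + (u : ℝ) + (a : ℝ) / (b : ℝ)) n =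
      (s : ℤ) * ((n : ℤ) * a - ⌊((n : ℝ) * (a : ℝ)) / (b : ℝ)⌋ * (b : ℤ)) +
        f ((u : ℝ) + (a : ℝ) / (b : ℝ)) n :=
  stmt8_general b hb s u a n
end

section
/- Let b ∈ ℕ with b ≥ 2 and s ∈ ℕ a positive integer. Then Range(f_{sb + 1/b}) = s·⟦0, b−1⟧ = {sr : r ∈ ℤ, 0 ≤ r ≤ b−1}. -/
/-!
Write `α = N + 1/b` with `N = s b`, so that `α² = (N² + 2s) + 1/b²`, and use
`⌊(S + 1/d) x⌋ = S x + ⌊x/d⌋` for integers `S`, `x`. With `q = ⌊n/b⌋` this gives `⌊α n⌋ = N n + q`,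
`⌊α (N n + q)⌋ = N² n + N q + s n + ⌊q/b⌋` and `⌊α² n⌋ = (N² + 2s) n + ⌊n/b²⌋`. As
`⌊n/b²⌋ = ⌊q/b⌋`, the difference is `s (n - b q) = s (n mod b)`.
-/

theorem Int.floor_intCast_add_one_div_mul {k : Type*} [Field k] [LinearOrder k] [IsOrderedRing k]
    [FloorRing k] (S x : ℤ) (d : ℕ) : ⌊((S : k) + 1 / d) * x⌋ = S * x + x / (d : ℤ) := by
  rw [add_mul, one_div_mul_eq_div, ← Int.cast_mul, Int.floor_intCast_add, Int.floor_div_natCast,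
    Int.floor_intCast]

theorem f_mul_add_inv_eq_mul_emod (s : ℤ) {b : ℕ} (hb : 0 < b) (n : ℕ) :
    f (s * b + 1 / b) n = s * ((n : ℤ) % b) := by
  have hb' : (b : ℝ) ≠ 0 := by positivity
  set q : ℤ := (n : ℤ) / b
  have h_sq : ((s : ℝ) * b + 1 / b) ^ 2 = ((s * s * b * b + 2 * s : ℤ) : ℝ) + 1 / (b * b : ℕ) := by
    push_cast
    field_simp
    ring
  have h_lin : (s : ℝ) * b + 1 / b = ((s * b : ℤ) : ℝ) + 1 / b := by push_cast; ring
  have h_outer : (s * b * n + q) / (b : ℤ) = s * n + q / b := by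
    rw [show s * b * n + q = q + b * (s * n) by ring, Int.add_mul_ediv_left _ _ (by omega)]
    ring
  have h_div_sq : (n : ℤ) / ((b * b : ℕ) : ℤ) = q / b := by
    rw [Nat.cast_mul, Int.ediv_ediv_of_nonneg (by omega)]
  rw [f, h_sq, h_lin, ← Int.cast_natCast n, Int.floor_intCast_add_one_div_mul,
    Int.floor_intCast_add_one_div_mul, Int.floor_intCast_add_one_div_mul, h_outer,
    h_div_sq, Int.emod_def]
  ring

theorem exists_pos_natCast_emod_eq {b : ℕ} {r : ℤ} (hr₀ : 0 ≤ r) (hr : r < b) :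
    ∃ n : ℕ, 1 ≤ n ∧ (n : ℤ) % b = r := by
  refine ⟨b + r.toNat, by omega, ?_⟩
  rw [Nat.cast_add, Int.toNat_of_nonneg hr₀, Int.add_emod_left, Int.emod_eq_of_lt hr₀ hr]

theorem stmt9_general (b : ℕ) (hb : 2 ≤ b) (s : ℕ) :
    Range ((s : ℝ) * (b : ℝ) + 1 / (b : ℝ)) =
      {v : ℤ | ∃ r : ℤ, 0 ≤ r ∧ r ≤ (b : ℤ) - 1 ∧ v = (s : ℤ) * r} := by
  have hb₀ : 0 < b := by omega
  have hf (n : ℕ) : f ((s : ℝ) * b + 1 / b) n = s * ((n : ℤ) % b) := by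
    simpa using f_mul_add_inv_eq_mul_emod s hb₀ n
  ext v
  constructor
  · rintro ⟨n, -, rfl⟩
    have := Int.emod_lt_of_pos (n : ℤ) (by omega : (0 : ℤ) < b)
    exact ⟨(n : ℤ) % b, Int.emod_nonneg _ (by omega), by omega, hf n⟩
  · rintro ⟨r, hr₀, hr, rfl⟩
    obtain ⟨n, hn, hnr⟩ := exists_pos_natCast_emod_eq hr₀ (by omega : r < b)
    exact ⟨n, hn, by rw [hf, hnr]⟩

theorem stmt9 (b : ℕ) (hb : 2 ≤ b) (s : ℕ) (hs : 1 ≤ s) :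
    Range ((s : ℝ) * (b : ℝ) + 1 / (b : ℝ)) =
      {v : ℤ | ∃ r : ℤ, 0 ≤ r ∧ r ≤ (b : ℤ) - 1 ∧ v = (s : ℤ) * r} :=
  stmt9_general b hb s
end

section
/- Let b ∈ ℕ with b ≥ 2, s ∈ ℕ ∪ {0}, and u ∈ ℤ with 0 ≤ u ≤ b−1. If n = bt + r is a positive integer with t, r ∈ ℤ, 0 ≤ t ≤ b−1, and 0 ≤ r ≤ b−1, then f_{sb + u + 1/b}(n) = sr + ⌊2ur/b + t/b + r/b²⌋ − ⌊ur/b + t/b⌋. -/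
/-! Write `α = m + 1/b` with `m = s b + u`. For `n = b t + r` one has `α n = m n + t + r/b`, so
`⌊α n⌋ = m n + t`; expanding `α² n` and `α (m n + t)` then leaves integer parts differing by
`s r` and the fractional expressions of the statement. -/

lemma natCast_pos_of_le_sub_one {b : ℕ} {r : ℤ} (hr0 : 0 ≤ r) (hr1 : r ≤ (b : ℤ) - 1) :
    (0 : ℝ) < b := by
  exact_mod_cast (show (0 : ℤ) < b by omega)

lemma floor_intCast_add_one_div_mul (m t r : ℤ) {b : ℕ} (hr0 : 0 ≤ r) (hr1 : r ≤ (b : ℤ) - 1) :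
    ⌊((m : ℝ) + 1 / b) * (b * t + r)⌋ = m * (b * t + r) + t := by
  have hb := natCast_pos_of_le_sub_one hr0 hr1
  have hsplit : ((m : ℝ) + 1 / b) * (b * t + r) = ((m * (b * t + r) + t : ℤ) : ℝ) + r / b := by
    push_cast
    field_simp
    ring
  have hfrac : ⌊(r : ℝ) / b⌋ = 0 := by
    rw [Int.floor_eq_zero_iff, Set.mem_Ico, div_lt_one hb]
    refine ⟨by positivity, ?_⟩
    exact_mod_cast (show r < b by omega)
  rw [hsplit, Int.floor_intCast_add, hfrac, add_zero]

theorem stmt10_general (b : ℕ) (s : ℕ) (u t r : ℤ)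
    (hr0 : 0 ≤ r) (hr1 : r ≤ (b : ℤ) - 1)
    (n : ℕ) (hnbt : (n : ℤ) = (b : ℤ) * t + r) :
    f ((s : ℝ) * (b : ℝ) + (u : ℝ) + 1 / (b : ℝ)) n =
      (s : ℤ) * r +
        ⌊2 * (u : ℝ) * (r : ℝ) / (b : ℝ) + (t : ℝ) / (b : ℝ) + (r : ℝ) / (b : ℝ) ^ 2⌋ -
        ⌊(u : ℝ) * (r : ℝ) / (b : ℝ) + (t : ℝ) / (b : ℝ)⌋ := by
  have hb := (natCast_pos_of_le_sub_one hr0 hr1).ne'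
  set m : ℤ := s * b + u
  have hα : (s : ℝ) * b + u + 1 / b = (m : ℝ) + 1 / b := by push_cast [m]; ring
  have hn : (n : ℝ) = b * t + r := by exact_mod_cast hnbt
  have hsq : ((m : ℝ) + 1 / b) ^ 2 * (b * t + r) =
      ((m ^ 2 * (b * t + r) + 2 * m * t + 2 * s * r : ℤ) : ℝ) +
        (2 * u * r / b + t / b + r / b ^ 2) := by
    push_cast [m]
    field_simp
    ring
  have hiter : ((m : ℝ) + 1 / b) * ((m * (b * t + r) + t : ℤ) : ℝ) =
      ((m ^ 2 * (b * t + r) + 2 * m * t + s * r : ℤ) : ℝ) + (u * r / b + t / b) := by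
    push_cast [m]
    field_simp
    ring
  rw [f, hα, hn, floor_intCast_add_one_div_mul m t r hr0 hr1, hsq, hiter,
    Int.floor_intCast_add, Int.floor_intCast_add]
  ring

theorem stmt10 (b : ℕ) (hb : 2 ≤ b) (s : ℕ) (u t r : ℤ)
    (hu0 : 0 ≤ u) (hu1 : u ≤ (b : ℤ) - 1)
    (ht0 : 0 ≤ t) (ht1 : t ≤ (b : ℤ) - 1)
    (hr0 : 0 ≤ r) (hr1 : r ≤ (b : ℤ) - 1)
    (n : ℕ) (hn : 1 ≤ n) (hnbt : (n : ℤ) = (b : ℤ) * t + r) :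
    f ((s : ℝ) * (b : ℝ) + (u : ℝ) + 1 / (b : ℝ)) n =
      (s : ℤ) * r +
        ⌊2 * (u : ℝ) * (r : ℝ) / (b : ℝ) + (t : ℝ) / (b : ℝ) + (r : ℝ) / (b : ℝ) ^ 2⌋ -
        ⌊(u : ℝ) * (r : ℝ) / (b : ℝ) + (t : ℝ) / (b : ℝ)⌋ :=
  stmt10_general b s u t r hr0 hr1 n hnbt
end

section
/- Let b ∈ ℕ with b ≥ 2, s ∈ ℕ ∪ {0}, and u ∈ ℤ with 0 ≤ u ≤ b−1, such that sb + u ≥ 1. Then Range(f_{sb + u + 1/b}) ⊆ s·⟦0, b−1⟧ + ⟦0, u⟧, i.e., every value of f_{sb+u+1/b} can be written as sr + v with 0 ≤ r ≤ b−1 and 0 ≤ v ≤ u. -/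
lemma floor_intCast_add_intCast_div_natCast (a c : ℤ) (d : ℕ) :
    ⌊(a : ℝ) + (c : ℝ) / d⌋ = a + c / d := by
  rw [Int.floor_intCast_add, Int.floor_div_natCast, Int.floor_intCast]

lemma floor_add_one_div_mul_intCast (a c : ℤ) (d : ℕ) :
    ⌊((a : ℝ) + 1 / d) * c⌋ = a * c + c / d := by
  rw [← floor_intCast_add_intCast_div_natCast]
  push_cast
  ring_nf

lemma floor_add_one_div_sq_mul_intCast (a c : ℤ) {d : ℕ} (hd : d ≠ 0) :
    ⌊((a : ℝ) + 1 / d) ^ 2 * c⌋ = a ^ 2 * c + (2 * a * d + 1) * c / (d ^ 2 : ℕ) := by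
  rw [← floor_intCast_add_intCast_div_natCast]
  congr 1
  push_cast
  field_simp
  ring

lemma mul_add_ediv_ediv (k n d : ℤ) (hd : d ≠ 0) :
    (k * n + n / d) / d = k * (n / d) + (k * (n % d) + n / d) / d := by
  have hn := Int.emod_add_mul_ediv n d
  rw [show k * n + n / d = (k * (n % d) + n / d) + d * (k * (n / d)) by
      linear_combination k * hn.symm,
    Int.add_mul_ediv_left _ _ hd, add_comm]

lemma add_ediv_sub_ediv (x y d : ℤ) (hd : d ≠ 0) : (x + y) / d - x / d = (x % d + y) / d := by
  have hx := Int.emod_add_mul_ediv x d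
  rw [show x + y = (x % d + y) + d * (x / d) by linear_combination hx.symm,
    Int.add_mul_ediv_left _ _ hd, add_sub_cancel_right]

lemma add_mul_ediv_mem_Icc {c t u d : ℤ} (hc0 : 0 ≤ c) (hc : c < d) (ht0 : 0 ≤ t) (ht : t < d)
    (hu : 0 ≤ u) : (c + u * t) / d ∈ Set.Icc 0 u := by
  have hd : 0 < d := hc0.trans_lt hc
  refine ⟨Int.ediv_nonneg (by positivity) hd.le, Int.lt_add_one_iff.mp ?_⟩
  rw [Int.ediv_lt_iff_lt_mul hd]
  nlinarith

lemma f_add_one_div (a : ℤ) {d : ℕ} (hd : d ≠ 0) (n : ℕ) :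
    f (a + 1 / d) n = (2 * a * (n % d) + n / d) / d - (a * (n % d) + n / d) / d := by
  have hdZ : (d : ℤ) ≠ 0 := by exact_mod_cast hd
  have hn : ((n : ℤ) : ℝ) = n := rfl
  have hsq : (2 * a * d + 1) * n / (d ^ 2 : ℕ) = (2 * a * n + n / d) / d := by
    rw [Nat.cast_pow, sq, ← Int.ediv_ediv_of_nonneg (by positivity),
      show (2 * a * d + 1) * n = n + d * (2 * a * n) by ring,
      Int.add_mul_ediv_left _ _ hdZ, add_comm]
  rw [f, ← hn, floor_add_one_div_sq_mul_intCast a n hd, floor_add_one_div_mul_intCast,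
    floor_add_one_div_mul_intCast, hsq, mul_add_ediv_ediv _ _ _ hdZ, mul_add_ediv_ediv _ _ _ hdZ]
  ring

lemma f_mul_add_add_one_div (s u : ℤ) {d : ℕ} (hd : d ≠ 0) (n : ℕ) :
    f ((s * d + u : ℤ) + 1 / d) n =
      s * (n % d) + ((u * (n % d) + n / d) % d + u * (n % d)) / d := by
  have hdZ : (d : ℤ) ≠ 0 := by exact_mod_cast hd
  set t : ℤ := n % d
  set q : ℤ := n / d
  rw [f_add_one_div _ hd, ← add_ediv_sub_ediv _ _ _ hdZ,
    show 2 * (s * d + u) * t + q = (u * t + q + u * t) + d * (2 * s * t) by ring,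
    show (s * d + u) * t + q = (u * t + q) + d * (s * t) by ring,
    Int.add_mul_ediv_left _ _ hdZ, Int.add_mul_ediv_left _ _ hdZ]
  ring

theorem stmt11_general (b : ℕ) (hb : 2 ≤ b) (s : ℕ) (u : ℤ) (hu0 : 0 ≤ u) :
    Range ((s : ℝ) * (b : ℝ) + (u : ℝ) + 1 / (b : ℝ)) ⊆
      {w : ℤ | ∃ r v : ℤ, 0 ≤ r ∧ r ≤ (b : ℤ) - 1 ∧ 0 ≤ v ∧ v ≤ u ∧
        w = (s : ℤ) * r + v} := by
  rintro _ ⟨n, -, rfl⟩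
  have hb0 : (0 : ℤ) < b := by omega
  have hα : (s : ℝ) * b + u + 1 / b = (((s : ℤ) * b + u : ℤ) : ℝ) + 1 / b := by push_cast; rfl
  have ht0 := Int.emod_nonneg (n : ℤ) hb0.ne'
  have htb := Int.emod_lt_of_pos (n : ℤ) hb0
  obtain ⟨hv0, hvu⟩ := add_mul_ediv_mem_Icc (Int.emod_nonneg _ hb0.ne')
    (Int.emod_lt_of_pos _ hb0) ht0 htb hu0
  refine ⟨_, _, ht0, Int.le_sub_one_of_lt htb, hv0, hvu, ?_⟩
  rw [hα, f_mul_add_add_one_div _ _ (by omega)]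

theorem stmt11 (b : ℕ) (hb : 2 ≤ b) (s : ℕ) (u : ℤ)
    (hu0 : 0 ≤ u) (hu1 : u ≤ (b : ℤ) - 1) (hpos : 1 ≤ (s : ℤ) * (b : ℤ) + u) :
    Range ((s : ℝ) * (b : ℝ) + (u : ℝ) + 1 / (b : ℝ)) ⊆
      {w : ℤ | ∃ r v : ℤ, 0 ≤ r ∧ r ≤ (b : ℤ) - 1 ∧ 0 ≤ v ∧ v ≤ u ∧
        w = (s : ℤ) * r + v} :=
  stmt11_general b hb s u hu0
end

section
/- Let b ∈ ℕ with b ≥ 2 and s ∈ ℕ ∪ {0}. Then Range(f_{sb + 1 + 1/b}) = (s·⟦0, b−1⟧) ∪ (s·⟦1, b−1⟧ + {1}) = {sr : 0 ≤ r ≤ b−1} ∪ {sr + 1 : 1 ≤ r ≤ b−1}. -/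
/-!
Write `α = c / b` with `c = s b² + b + 1`, so that every floor in `f α n` is an integer division
by `b`. Expanding `n = q b + t` with `0 ≤ t < b`, all terms cancel except
`f α n = s t + ⌊(q + 2t) / b⌋ - ⌊(q + t) / b⌋`, and the last difference is the carry of adding
`t` to `q + t` in base `b`: it is `0` or `1`, it is `0` when `t = 0`, and choosing `q = b - t` or
`q = b - 1 - t` makes it `0` or `1` respectively.
-/

lemma Int.floor_intCast_div_natCast {k : Type*} [Field k] [LinearOrder k] [IsOrderedRing k]
    [FloorRing k] (m : ℤ) (d : ℕ) : ⌊(m / d : k)⌋ = m / (d : ℤ) := by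
  rw [Int.floor_div_natCast, Int.floor_intCast]

lemma f_intCast_div_natCast (c : ℤ) (b n : ℕ) :
    f (c / b) n = c ^ 2 * n / b / b - c * (c * n / b) / b := by
  have hlin (m : ℤ) : ⌊(c / b : ℝ) * m⌋ = c * m / b := by
    rw [← Int.floor_intCast_div_natCast (k := ℝ)]; push_cast; ring_nf
  have hsq : ((c / b : ℝ)) ^ 2 * n = ((c ^ 2 * n : ℤ) / b : ℝ) / b := by push_cast; ring
  rw [f, hsq, Int.floor_div_natCast, Int.floor_intCast_div_natCast, hlin, ← hlin n]
  norm_cast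

lemma ediv_eq_of_eq_add_mul {a r M b : ℤ} (hb : 0 < b) (h0 : 0 ≤ r) (hr : r < b)
    (ha : a = r + M * b) : a / b = M := by
  rw [ha, Int.add_mul_ediv_right _ _ hb.ne', Int.ediv_eq_zero_of_lt h0 hr, zero_add]

lemma ediv_ediv_sub_ediv_ediv_eq_carries (s b q t : ℤ) (hb : 0 < b) (ht0 : 0 ≤ t)
    (htb : t < b) :
    (s * b ^ 2 + b + 1) ^ 2 * (q * b + t) / b / b
      - (s * b ^ 2 + b + 1) * ((s * b ^ 2 + b + 1) * (q * b + t) / b) / b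
      = s * t + (q + 2 * t) / b - (q + t) / b := by
  set c := s * b ^ 2 + b + 1
  set K := c * q + (s * b + 1) * t
  have hb0 := hb.ne'
  have hK : c * (q * b + t) / b = K := ediv_eq_of_eq_add_mul hb ht0 htb (by ring)
  have h1 : c * K / b = (s * b + 1) * K + K / b := by
    rw [show c * K = K + (s * b + 1) * K * b by ring, Int.add_mul_ediv_right _ _ hb0, add_comm]
  have h2 : c ^ 2 * (q * b + t) / b = K + (s * b + 1) * t + (s * b + 1) * K * b :=
    ediv_eq_of_eq_add_mul hb ht0 htb (by ring)
  rw [hK, h1, h2, Int.add_mul_ediv_right _ _ hb0,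
    show K + (s * b + 1) * t = q + 2 * t + (s * b * q + q + 2 * s * t) * b by ring,
    show K = q + t + (s * b * q + q + s * t) * b by ring,
    Int.add_mul_ediv_right _ _ hb0, Int.add_mul_ediv_right _ _ hb0]
  ring

lemma add_div_eq_add_carry {x t b : ℕ} (ht : t < b) :
    (x + t) / b = x / b + if b ≤ x % b + t then 1 else 0 := by
  rw [Nat.add_div (by omega), Nat.div_eq_of_lt ht, Nat.mod_eq_of_lt ht, add_zero]

lemma f_mul_add (s b q t : ℕ) (ht : t < b) :
    f (s * b + 1 + 1 / b) (q * b + t) = s * t + if b ≤ (q + t) % b + t then 1 else 0 := by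
  have hb : 0 < b := by omega
  have hα : (s * b + 1 + 1 / b : ℝ) = ((s * b ^ 2 + b + 1 : ℤ) : ℝ) / b := by
    push_cast; field_simp
  have hcarry : ((q : ℤ) + 2 * t) / b = (q + t) / b + if b ≤ (q + t) % b + t then 1 else 0 := by
    have := add_div_eq_add_carry (x := q + t) ht
    rw [show (q : ℤ) + 2 * t = ((q + t + t : ℕ) : ℤ) by push_cast; ring]
    exact_mod_cast this
  rw [hα, f_intCast_div_natCast]
  push_cast
  rw [ediv_ediv_sub_ediv_ediv_eq_carries s b q t (by exact_mod_cast hb) (by positivity)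
    (by exact_mod_cast ht), hcarry]
  ring

theorem stmt12 (b : ℕ) (hb : 2 ≤ b) (s : ℕ) :
    Range ((s : ℝ) * (b : ℝ) + 1 + 1 / (b : ℝ)) =
      {w : ℤ | ∃ r : ℤ, 0 ≤ r ∧ r ≤ (b : ℤ) - 1 ∧ w = (s : ℤ) * r} ∪
      {w : ℤ | ∃ r : ℤ, 1 ≤ r ∧ r ≤ (b : ℤ) - 1 ∧ w = (s : ℤ) * r + 1} := by
  ext w
  constructor
  · rintro ⟨n, -, rfl⟩
    have ht : n % b < b := Nat.mod_lt _ (by omega)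
    rw [← Nat.div_add_mod' n b, f_mul_add s b _ _ ht]
    split_ifs with hcarry
    · have hlt : (n / b + n % b) % b < b := Nat.mod_lt _ (by omega)
      exact Or.inr ⟨n % b, by omega, by omega, rfl⟩
    · exact Or.inl ⟨n % b, by omega, by omega, by push_cast; ring⟩
  · rintro (⟨r, hr0, hrb, rfl⟩ | ⟨r, hr1, hrb, rfl⟩) <;>
      obtain ⟨r, rfl⟩ := Int.eq_ofNat_of_zero_le (by omega : 0 ≤ r)
    · refine ⟨(b - r) * b + r, ?_, ?_⟩
      · nlinarith [Nat.sub_pos_of_lt (show r < b by omega)]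
      · rw [f_mul_add s b _ _ (by omega), Nat.sub_add_cancel (by omega), Nat.mod_self,
          if_neg (by omega), add_zero]
    · refine ⟨(b - 1 - r) * b + r, by omega, ?_⟩
      rw [f_mul_add s b _ _ (by omega), show b - 1 - r + r = b - 1 by omega,
        Nat.mod_eq_of_lt (by omega), if_pos (by omega)]
end

section
/- Let s ∈ ℕ be a positive integer. Then: (i) Range(f_{3s+1/3}) = {0, s, 2s}; (ii) Range(f_{3s+2/3}) = {0, s, 2s, 2s+1}; (iii) Range(f_{3s−2+1/3}) = {0, s−1, s, 2s−2, 2s−1}; (iv) Range(f_{3s−2+2/3}) = {0, s−1, s, 2s−1}; (v) Range(f_{3s−1+1/3}) = {0, s−1, s, 2s−1, 2s}; (vi) Range(f_{3s−1+2/3}) = {0, s−1, s, 2s−1, 2s}. -/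
/-!
Write `α = 3s + c/3` with `s, c ∈ ℤ`. Since `3s · (c/3) = sc` is an integer, the integer
part `3s` passes through both floors and `f_α(n) = f_{c/3}(n) + s · (cn mod 3)`. Moreover `9α` and
`9α²` are integers, so `f_α` is `9`-periodic, and since `f_α(9) = f_α(0) = 0` the range of `f_α`
consists of the nine values at `n = 0, …, 8`, which are computed directly for
`c ∈ {1, 2, -5, -4, -2, -1}`.
-/

lemma f_periodic_s14 {α : ℝ} {p : ℕ} {a b : ℤ} (ha : p * α = a) (hb : p * α ^ 2 = b) :
    Function.Periodic (f α) p := by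
  intro n
  have h₁ : α ^ 2 * ((n + p : ℕ) : ℝ) = α ^ 2 * n + b := by push_cast; linear_combination hb
  have h₂ : α * ((n + p : ℕ) : ℝ) = α * n + a := by push_cast; linear_combination ha
  have h₃ : α * ((⌊α * n⌋ + a : ℤ) : ℝ) = α * ⌊α * n⌋ + b := by
    push_cast; linear_combination hb - α * ha
  rw [f, f, h₁, h₂, Int.floor_add_intCast, Int.floor_add_intCast, h₃, Int.floor_add_intCast]
  ring

lemma range_eq_of_periodic {α : ℝ} {p : ℕ} (hp : 0 < p) (h : Function.Periodic (f α) p) :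
    Range α = {v | ∃ r < p, f α r = v} := by
  ext v
  constructor
  · rintro ⟨n, -, rfl⟩
    exact ⟨n % p, Nat.mod_lt n hp, h.map_mod_nat n⟩
  · rintro ⟨r, -, rfl⟩
    rcases Nat.eq_zero_or_pos r with rfl | hr₀
    · exact ⟨p, hp, by simpa using h 0⟩
    · exact ⟨r, hr₀, rfl⟩

lemma floor_intCast_div_three (m : ℤ) : ⌊(m : ℝ) / 3⌋ = m / 3 := by
  simpa using Int.floor_div_natCast (m : ℝ) 3

lemma f_intCast_add {k m : ℤ} {β : ℝ} (h : k * β = m) (n : ℕ) :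
    f (k + β) n = f β n + m * n - k * ⌊β * n⌋ := by
  have h₁ : (k + β) ^ 2 * n = β ^ 2 * n + ((k ^ 2 * n + 2 * m * n : ℤ) : ℝ) := by
    push_cast; linear_combination 2 * (n : ℝ) * h
  have h₂ : (k + β) * n = β * n + ((k * n : ℤ) : ℝ) := by push_cast; ring
  have h₃ : (k + β) * ((⌊β * n⌋ + k * n : ℤ) : ℝ)
      = β * ⌊β * n⌋ + ((k * ⌊β * n⌋ + k ^ 2 * n + m * n : ℤ) : ℝ) := by
    push_cast; linear_combination (n : ℝ) * h
  rw [f, h₁, h₂, Int.floor_add_intCast, Int.floor_add_intCast, h₃, Int.floor_add_intCast, f]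
  ring

lemma f_three_mul_add_div_three (s c : ℤ) (n : ℕ) :
    f (3 * s + c / 3) n = f (c / 3) n + s * (c * n % 3) := by
  have key := f_intCast_add (k := 3 * s) (m := s * c) (β := c / 3) (by push_cast; ring) n
  have h' : (c : ℝ) / 3 * n = ((c * n : ℤ) : ℝ) / 3 := by push_cast; ring
  push_cast at key
  rw [key, h', floor_intCast_div_three, Int.emod_def]
  ring

lemma range_eq_of_eq_three_mul_add_div_three {α : ℝ} (s c : ℤ) (hα : α = 3 * s + c / 3) :
    Range α = {v | ∃ r < 9, f (c / 3) r + s * (c * r % 3) = v} := by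
  subst hα
  have hper : Function.Periodic (f (3 * s + c / 3)) 9 :=
    f_periodic_s14 (a := 27 * s + 3 * c) (b := (9 * s + c) ^ 2) (by push_cast; ring)
      (by push_cast; ring)
  simp only [range_eq_of_periodic (by norm_num) hper, f_three_mul_add_div_three]

theorem stmt14_general (s : ℕ) :
    Range (3 * (s : ℝ) + 1 / 3) = {0, (s : ℤ), 2 * (s : ℤ)} ∧
    Range (3 * (s : ℝ) + 2 / 3) = {0, (s : ℤ), 2 * (s : ℤ), 2 * (s : ℤ) + 1} ∧
    Range (3 * (s : ℝ) - 2 + 1 / 3) =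
      {0, (s : ℤ) - 1, (s : ℤ), 2 * (s : ℤ) - 2, 2 * (s : ℤ) - 1} ∧
    Range (3 * (s : ℝ) - 2 + 2 / 3) = {0, (s : ℤ) - 1, (s : ℤ), 2 * (s : ℤ) - 1} ∧
    Range (3 * (s : ℝ) - 1 + 1 / 3) =
      {0, (s : ℤ) - 1, (s : ℤ), 2 * (s : ℤ) - 1, 2 * (s : ℤ)} ∧
    Range (3 * (s : ℝ) - 1 + 2 / 3) =
      {0, (s : ℤ) - 1, (s : ℤ), 2 * (s : ℤ) - 1, 2 * (s : ℤ)} := by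
  refine ⟨(range_eq_of_eq_three_mul_add_div_three s 1 (by push_cast; ring)).trans ?_,
    (range_eq_of_eq_three_mul_add_div_three s 2 (by push_cast; ring)).trans ?_,
    (range_eq_of_eq_three_mul_add_div_three s (-5) (by push_cast; ring)).trans ?_,
    (range_eq_of_eq_three_mul_add_div_three s (-4) (by push_cast; ring)).trans ?_,
    (range_eq_of_eq_three_mul_add_div_three s (-2) (by push_cast; ring)).trans ?_,
    (range_eq_of_eq_three_mul_add_div_three s (-1) (by push_cast; ring)).trans ?_⟩
  all_goals
    ext v
    simp only [Set.mem_ofPred_eq, Set.mem_insert_iff, Set.mem_singleton_iff,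
      Nat.lt_succ_iff_lt_or_eq, or_and_right, exists_or, exists_eq_left]
    norm_num [f]
    omega

theorem stmt14 (s : ℕ) (hs : 1 ≤ s) :
    Range (3 * (s : ℝ) + 1 / 3) = {0, (s : ℤ), 2 * (s : ℤ)} ∧
    Range (3 * (s : ℝ) + 2 / 3) = {0, (s : ℤ), 2 * (s : ℤ), 2 * (s : ℤ) + 1} ∧
    Range (3 * (s : ℝ) - 2 + 1 / 3) =
      {0, (s : ℤ) - 1, (s : ℤ), 2 * (s : ℤ) - 2, 2 * (s : ℤ) - 1} ∧
    Range (3 * (s : ℝ) - 2 + 2 / 3) = {0, (s : ℤ) - 1, (s : ℤ), 2 * (s : ℤ) - 1} ∧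
    Range (3 * (s : ℝ) - 1 + 1 / 3) =
      {0, (s : ℤ) - 1, (s : ℤ), 2 * (s : ℤ) - 1, 2 * (s : ℤ)} ∧
    Range (3 * (s : ℝ) - 1 + 2 / 3) =
      {0, (s : ℤ) - 1, (s : ℤ), 2 * (s : ℤ) - 1, 2 * (s : ℤ)} :=
  stmt14_general s
end

section
/- Let t ∈ ℕ be a positive integer such that t is not of the form (s−1)s for any s ∈ ℕ, and let α(t) = (1 + √(1 + 4t))/2 (which is irrational and greater than 1). Then Range(f_{α(t)}) = ⟦1, ⌊α(t)⌋⟧ = {m ∈ ℤ : 1 ≤ m ≤ ⌊α(t)⌋}. -/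
/-- The generalized golden ratio `α(t) = (1 + √(1 + 4t))/2`. -/
noncomputable def alphaT (t : ℕ) : ℝ := (1 + Real.sqrt (1 + 4 * (t : ℝ))) / 2

/-!
Since `α² = α + t`, one has `f α n = ⌈(α - 1) θ⌉` with `θ = fract (α n)`. For irrational `α`
(equivalently, `1 + 4t` not a square, i.e. `t ≠ s (s + 1)`), `θ` lies in `(0, 1)` and the
positive multiples make it dense there, so these ceilings take exactly the values
`1, …, ⌈α - 1⌉ = ⌊α⌋`.
-/

theorem exists_nat_mul_mem_Ioo {x u v : ℝ} (hx : 0 < x) (hu : 0 ≤ u) (hxuv : x < v - u) :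
    ∃ M : ℕ, 0 < M ∧ (M : ℝ) * x ∈ Set.Ioo u v := by
  refine ⟨⌊u / x⌋₊ + 1, Nat.succ_pos _, ?_, ?_⟩
  · have := Nat.lt_floor_add_one (u / x)
    rw [div_lt_iff₀ hx] at this
    exact_mod_cast this
  · have := Nat.floor_le (div_nonneg hu hx.le)
    rw [le_div_iff₀ hx] at this
    push_cast
    linarith

theorem Irrational.exists_fract_nat_mul_mem_Ioo {α u v : ℝ} (hα : Irrational α) (hu : 0 ≤ u)
    (huv : u < v) (hv : v ≤ 1) : ∃ n : ℕ, 0 < n ∧ Int.fract (α * n) ∈ Set.Ioo u v := by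
  have hdense : Dense (AddSubgroup.closure {α, 1} : Set ℝ) :=
    dense_addSubgroupClosure_pair_iff.mpr (by simpa using hα)
  obtain ⟨x, hx, hx0, hxuv⟩ := hdense.exists_between (sub_pos.mpr huv)
  obtain ⟨m, k, rfl⟩ := AddSubgroup.mem_closure_pair.mp hx
  simp only [zsmul_eq_mul, mul_one] at hx0 hxuv
  rcases lt_trichotomy m 0 with hm | rfl | hm
  · -- multiples `M x ∈ (1 - v, 1 - u)` give `fract (α * (M * |m|)) = 1 - M x ∈ (u, v)`
    obtain ⟨M, hM, hMu, hMv⟩ := exists_nat_mul_mem_Ioo (u := 1 - v) (v := 1 - u) hx0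
      (by linarith) (by linarith)
    refine ⟨M * m.natAbs, Nat.mul_pos hM (Int.natAbs_pos.mpr hm.ne), ?_⟩
    have : α * ↑(M * m.natAbs) = (1 - M * (m * α + k)) + ((M * k - 1 : ℤ) : ℝ) := by
      push_cast [Nat.cast_natAbs, abs_of_neg hm]; ring
    rw [this, Int.fract_add_intCast, Int.fract_eq_self.mpr ⟨by linarith, by linarith⟩]
    constructor <;> linarith
  · simp only [Int.cast_zero, zero_mul, zero_add] at hx0 hxuv
    have : (1 : ℝ) ≤ k := by exact_mod_cast (Int.cast_pos.mp hx0 : 1 ≤ k)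
    linarith
  · obtain ⟨M, hM, hMu, hMv⟩ := exists_nat_mul_mem_Ioo hx0 hu hxuv
    refine ⟨M * m.natAbs, Nat.mul_pos hM (Int.natAbs_pos.mpr hm.ne'), ?_⟩
    have : α * ↑(M * m.natAbs) = M * (m * α + k) + ((-(M * k) : ℤ) : ℝ) := by
      push_cast [Nat.cast_natAbs, abs_of_pos hm]; ring
    rw [this, Int.fract_add_intCast, Int.fract_eq_self.mpr ⟨by linarith, by linarith⟩]
    exact ⟨hMu, hMv⟩

theorem f_eq_ceil_of_sq_eq {α : ℝ} {c : ℤ} (h : α ^ 2 = α + c) (n : ℕ) :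
    f α n = ⌈(α - 1) * Int.fract (α * n)⌉ := by
  have hsq : α ^ 2 * n = α * n + ((c * n : ℤ) : ℝ) := by push_cast; linear_combination n * h
  -- `α ⌊α n⌋ = α² n - α θ = ⌊α n⌋ + c n - (α - 1) θ`, where `θ = fract (α n)`
  have hmul : α * ⌊α * n⌋ = -((α - 1) * Int.fract (α * n)) + ((⌊α * n⌋ + c * n : ℤ) : ℝ) := by
    rw [Int.fract]; push_cast; linear_combination n * h
  rw [f, hsq, hmul, Int.floor_add_intCast, Int.floor_add_intCast, Int.floor_neg]
  ring

theorem ceil_mul_fract_mem_Icc {α : ℝ} (hα : Irrational α) (h1 : 1 < α) {n : ℕ} (hn : 0 < n) :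
    ⌈(α - 1) * Int.fract (α * n)⌉ ∈ Set.Icc 1 ⌊α⌋ := by
  have hθ0 : 0 < Int.fract (α * n) :=
    Int.fract_pos.mpr ((hα.mul_natCast hn.ne').ne_int _)
  have hθ1 := Int.fract_lt_one (α * n)
  constructor
  · exact Int.one_le_ceil_iff.mpr (mul_pos (by linarith) hθ0)
  · rw [Int.ceil_le]
    nlinarith [Int.sub_one_lt_floor α]

theorem exists_ceil_mul_fract_eq {α : ℝ} (hα : Irrational α) (h1 : 1 < α) {m : ℤ} (hm1 : 1 ≤ m)
    (hm : m ≤ ⌊α⌋) : ∃ n : ℕ, 0 < n ∧ ⌈(α - 1) * Int.fract (α * n)⌉ = m := by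
  have hα1 : 0 < α - 1 := sub_pos.mpr h1
  have hmα : (m : ℝ) < α :=
    lt_of_le_of_ne ((Int.cast_le.mpr hm).trans (Int.floor_le α)) (hα.ne_int m).symm
  obtain ⟨n, hn, hθu, hθv⟩ := hα.exists_fract_nat_mul_mem_Ioo
    (u := (m - 1) / (α - 1)) (v := min (m / (α - 1)) 1)
    (div_nonneg (sub_nonneg.mpr (by exact_mod_cast hm1)) hα1.le)
    (lt_min (by gcongr; linarith) ((div_lt_one hα1).mpr (by linarith))) (min_le_right _ _)
  refine ⟨n, hn, Int.ceil_eq_iff.mpr ⟨?_, ?_⟩⟩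
  · rw [div_lt_iff₀ hα1] at hθu
    linarith
  · have := (lt_div_iff₀ hα1).mp (hθv.trans_le (min_le_left _ _))
    linarith

theorem range_eq_of_sq_eq {α : ℝ} (hα : Irrational α) (h1 : 1 < α) {c : ℤ} (h : α ^ 2 = α + c) :
    Range α = {m : ℤ | 1 ≤ m ∧ m ≤ ⌊α⌋} := by
  ext m
  simp only [Range, f_eq_ceil_of_sq_eq h]
  constructor
  · rintro ⟨n, hn, rfl⟩
    exact ceil_mul_fract_mem_Icc hα h1 hn
  · rintro ⟨hm1, hm⟩
    exact exists_ceil_mul_fract_eq hα h1 hm1 hm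

theorem alphaT_sq (t : ℕ) : alphaT t ^ 2 = alphaT t + t := by
  have := Real.sq_sqrt (by positivity : (0 : ℝ) ≤ 1 + 4 * t)
  rw [alphaT]
  linear_combination this / 4

theorem one_lt_alphaT {t : ℕ} (ht : 1 ≤ t) : 1 < alphaT t := by
  have : 1 < √(1 + 4 * (t : ℝ)) :=
    (Real.lt_sqrt zero_le_one).mpr (by norm_num; exact_mod_cast ht)
  rw [alphaT]
  linarith

theorem not_isSquare_one_add_four_mul {t : ℕ} (h : ∀ s : ℕ, t ≠ s * (s + 1)) :
    ¬IsSquare (1 + 4 * t) := by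
  rintro ⟨r, hr⟩
  rcases Nat.even_or_odd' r with ⟨s, rfl | rfl⟩
  · have : 1 + 4 * t = 4 * (s * s) := by rw [hr]; ring
    omega
  · exact h s (by nlinarith)

theorem irrational_alphaT {t : ℕ} (h : ¬IsSquare (1 + 4 * t)) : Irrational (alphaT t) := by
  have : Irrational √((1 + 4 * t : ℕ) : ℝ) := irrational_sqrt_natCast_iff.mpr h
  push_cast at this
  simpa [alphaT] using (this.natCast_add 1).div_natCast two_ne_zero

theorem stmt15 (t : ℕ) (ht : 1 ≤ t) (hnf : ∀ s : ℕ, 1 ≤ s → t ≠ (s - 1) * s) :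
    Range (alphaT t) = {m : ℤ | 1 ≤ m ∧ m ≤ ⌊alphaT t⌋} := by
  have hsq : ¬IsSquare (1 + 4 * t) :=
    not_isSquare_one_add_four_mul fun s => by simpa using hnf (s + 1) (Nat.le_add_left 1 s)
  refine range_eq_of_sq_eq (irrational_alphaT hsq) (one_lt_alphaT ht) (c := t) ?_
  rw [Int.cast_natCast]
  exact alphaT_sq t
end

section
/- Range(f_{2+√2}) = {0, 1, 2, 3}; that is, for every positive integer n, f_{2+√2}(n) ∈ {0, 1, 2, 3}, and all four values 0, 1, 2, 3 are attained. -/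
open Real

lemma floor_mul_fract_nonneg_and_lt (c : ℕ) (hc : 0 < c) (y : ℝ) :
    0 ≤ ⌊(c : ℝ) * Int.fract y⌋ ∧ ⌊(c : ℝ) * Int.fract y⌋ < c := by
  have hc' : (0 : ℝ) < c := by exact_mod_cast hc
  refine ⟨Int.floor_nonneg.2 (by positivity), Int.floor_lt.2 ?_⟩
  push_cast
  nlinarith [Int.fract_lt_one y]

lemma floor_intCast_mul_fract (c : ℤ) (y : ℝ) :
    ⌊(c : ℝ) * Int.fract y⌋ = ⌊c * y⌋ - c * ⌊y⌋ := by
  rw [Int.fract, mul_sub, ← Int.cast_mul, Int.floor_sub_intCast]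

lemma floor_sqrt_two_mul_natCast (n : ℕ) : ⌊√2 * n⌋ = Nat.sqrt (2 * n ^ 2) := by
  have h : √2 * n = √((2 * n ^ 2 : ℕ) : ℝ) := by
    push_cast
    rw [sqrt_mul (by norm_num), sqrt_sq (Nat.cast_nonneg n)]
  rw [h, Real.floor_real_sqrt_eq_nat_sqrt]

lemma f_two_add_sqrt_two (n : ℕ) : f (2 + √2) n = ⌊4 * Int.fract (√2 * n)⌋ := by
  set y := √2 * n with hy
  have hs : √2 ^ 2 = 2 := sq_sqrt (by norm_num)
  have hyx : y = ⌊y⌋ + Int.fract y := (Int.floor_add_fract y).symm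
  have h_inner : ⌊(2 + √2) * n⌋ = 2 * n + ⌊y⌋ := by
    rw [show (2 + √2) * n = ((2 * n : ℤ) : ℝ) + y by push_cast; ring, Int.floor_intCast_add]
  have h_outer : (2 + √2) * ((2 * n + ⌊y⌋ : ℤ) : ℝ)
      = ((6 * n + 4 * ⌊y⌋ : ℤ) : ℝ) + (2 - √2) * Int.fract y := by
    push_cast
    linear_combination (n : ℝ) * hs + (√2 - 2) * hy - (√2 - 2) * hyx
  have h_sq : (2 + √2) ^ 2 * n = ((6 * n + 4 * ⌊y⌋ : ℤ) : ℝ) + 4 * Int.fract y := by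
    push_cast
    linear_combination (n : ℝ) * hs - 4 * hy + 4 * hyx
  have h_small : ⌊(2 - √2) * Int.fract y⌋ = 0 := by
    rw [Int.floor_eq_zero_iff]
    constructor <;> nlinarith [Int.fract_nonneg y, Int.fract_lt_one y, sqrt_nonneg 2]
  rw [f, h_inner, h_outer, h_sq, Int.floor_intCast_add, Int.floor_intCast_add, h_small]
  ring

lemma f_two_add_sqrt_two_eq_nat_sqrt (n : ℕ) :
    f (2 + √2) n = Nat.sqrt (2 * (4 * n) ^ 2) - 4 * Nat.sqrt (2 * n ^ 2) := by
  have h4n := floor_sqrt_two_mul_natCast (4 * n)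
  push_cast at h4n
  have h := floor_intCast_mul_fract 4 (√2 * n)
  rw [show ((4 : ℤ) : ℝ) * (√2 * n) = √2 * (4 * n) by push_cast; ring] at h
  push_cast at h
  rw [f_two_add_sqrt_two, h, h4n, floor_sqrt_two_mul_natCast]

theorem stmt18 : Range (2 + Real.sqrt 2) = {0, 1, 2, 3} := by
  ext v
  simp only [Range, Set.mem_ofPred_eq, Set.mem_insert_iff, Set.mem_singleton_iff]
  constructor
  · rintro ⟨n, -, rfl⟩
    have h := floor_mul_fract_nonneg_and_lt 4 (by norm_num) (√2 * n)
    push_cast at h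
    rw [f_two_add_sqrt_two]
    omega
  · rintro (rfl | rfl | rfl | rfl)
    · exact ⟨3, by norm_num, by rw [f_two_add_sqrt_two_eq_nat_sqrt]; norm_num⟩
    · exact ⟨1, by norm_num, by rw [f_two_add_sqrt_two_eq_nat_sqrt]; norm_num⟩
    · exact ⟨4, by norm_num, by rw [f_two_add_sqrt_two_eq_nat_sqrt]; norm_num⟩
    · exact ⟨2, by norm_num, by rw [f_two_add_sqrt_two_eq_nat_sqrt]; norm_num⟩
end

section
/- Let k, n ∈ ℕ be positive integers with k < n such that √(k/n) is irrational, and set ε_{k,n} = (1/n)·min{⌈√(kn)⌉ − √(kn), √(kn) − ⌊√(kn)⌋} > 0. Then for every real α with √(k/n) ≤ α < √(k/n) + ε_{k,n}, one has f_α(n) = 1. -/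
/-!
Put `x = √(kn)`, `m = ⌊x⌋` and `y = αn`, so that `x ≤ y < x + t` with `t` the distance from `x`
to the nearest integer. Then `⌊αn⌋ = m`; since `t ≤ x - m`, `y m` lies strictly between
`x² - n = (k - 1)n` and `x² = kn`, so `⌊α m⌋ = k - 1`; and since `t ≤ 1/2` and `x < n - 1/4`,
`y²` lies in `[kn, (k + 1)n)`, so `⌊α² n⌋ = k`.
-/

section FloorRing

variable {K : Type*} [Field K] [LinearOrder K] [IsStrictOrderedRing K] [FloorRing K]

lemma Int.floor_eq_floor_of_le_of_lt_ceil {x y : K} (hxy : x ≤ y) (hy : y < ⌈x⌉) :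
    ⌊y⌋ = ⌊x⌋ := by
  have hceil : (⌈x⌉ : K) ≤ ⌊x⌋ + 1 := by exact_mod_cast Int.ceil_le_floor_add_one x
  rw [Int.floor_eq_iff]
  exact ⟨(Int.floor_le x).trans hxy, hy.trans_le hceil⟩

lemma min_ceil_sub_sub_floor_le_half (x : K) : min (⌈x⌉ - x) (x - ⌊x⌋) ≤ 1 / 2 := by
  have hceil : (⌈x⌉ : K) ≤ ⌊x⌋ + 1 := by exact_mod_cast Int.ceil_le_floor_add_one x
  linarith [min_le_left (⌈x⌉ - x) (x - ⌊x⌋), min_le_right (⌈x⌉ - x) (x - ⌊x⌋)]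

lemma Int.floor_div_eq_of_mul_le_of_lt {z n : K} {k : ℤ} (hn : 0 < n) (hlo : k * n ≤ z)
    (hhi : z < (k + 1) * n) : ⌊z / n⌋ = k := by
  rw [Int.floor_eq_iff, le_div_iff₀ hn, div_lt_iff₀ hn]
  exact ⟨hlo, hhi⟩

lemma sq_sub_lt_mul_floor_of_le_of_lt {x y n : K} (hx : 0 ≤ x) (hxn : x < n) (hxy : x ≤ y) :
    x ^ 2 - n < y * ⌊x⌋ := by
  have hm : (0 : K) ≤ ⌊x⌋ := by exact_mod_cast Int.floor_nonneg.mpr hx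
  nlinarith [Int.sub_one_lt_floor x, mul_le_mul_of_nonneg_right hxy hm]

lemma mul_floor_lt_sq_of_lt_two_mul_sub_floor {x y : K} (hx : 0 ≤ x) (hxy : x ≤ y)
    (hy : y < x + (x - ⌊x⌋)) : y * ⌊x⌋ < x ^ 2 := by
  have hm : (0 : K) ≤ ⌊x⌋ := by exact_mod_cast Int.floor_nonneg.mpr hx
  -- `(2x - m) m = x² - (x - m)²`, and `x - m > 0` because the interval `[x, 2x - m)` is nonempty
  nlinarith [mul_le_mul_of_nonneg_right hy.le hm]

lemma sq_lt_sq_add_of_lt_add_half {x y n : K} (hx : 0 ≤ x) (hxn : x + 1 / 4 < n) (hxy : x ≤ y)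
    (hy : y < x + 1 / 2) : y ^ 2 < x ^ 2 + n := by
  nlinarith

end FloorRing

lemma Real.sqrt_mul_add_quarter_lt_of_lt {k n : ℕ} (hkn : k < n) : √((k : ℝ) * n) + 1 / 4 < n := by
  have hkn' : (k : ℝ) + 1 ≤ n := by exact_mod_cast hkn
  have hsqrt : √((k : ℝ) * n) < n - 1 / 4 := by
    rw [Real.sqrt_lt' (by linarith)]
    nlinarith
  linarith

lemma Real.sqrt_div_eq_sqrt_mul_div (a : ℝ) {b : ℝ} (hb : 0 ≤ b) : √(a / b) = √(a * b) / b := by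
  rcases hb.eq_or_lt with rfl | hb
  · simp
  rw [Real.sqrt_div' a hb.le, Real.sqrt_mul' a hb.le,
    div_eq_div_iff (Real.sqrt_pos.mpr hb).ne' hb.ne', mul_assoc, Real.mul_self_sqrt hb.le]

theorem f_eq_one_of_sqrt_le_mul_lt {k n : ℕ} (hkn : k < n) {α : ℝ}
    (h1 : √((k : ℝ) * n) ≤ α * n)
    (h2 : α * n < √((k : ℝ) * n) +
      min ((⌈√((k : ℝ) * n)⌉ : ℝ) - √((k : ℝ) * n)) (√((k : ℝ) * n) - ⌊√((k : ℝ) * n)⌋)) :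
    f α n = 1 := by
  set x := √((k : ℝ) * n)
  set y := α * n
  have hn : (0 : ℝ) < n := by exact_mod_cast (Nat.zero_le k).trans_lt hkn
  have hx : 0 ≤ x := Real.sqrt_nonneg _
  have hx2 : x ^ 2 = k * n := Real.sq_sqrt (by positivity)
  have hxn : x + 1 / 4 < n := Real.sqrt_mul_add_quarter_lt_of_lt hkn
  have hα : α = y / n := (mul_div_cancel_right₀ α hn.ne').symm
  have hA : ⌊y⌋ = ⌊x⌋ :=
    Int.floor_eq_floor_of_le_of_lt_ceil h1 (by linarith [min_le_left (⌈x⌉ - x) (x - ⌊x⌋)])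
  have hB : ⌊α * ⌊x⌋⌋ = k - 1 := by
    rw [hα, div_mul_eq_mul_div]
    apply Int.floor_div_eq_of_mul_le_of_lt hn
    · push_cast
      linarith [sq_sub_lt_mul_floor_of_le_of_lt hx (by linarith : x < n) h1]
    · push_cast
      linarith [mul_floor_lt_sq_of_lt_two_mul_sub_floor hx h1
        (h2.trans_le (by linarith [min_le_right (⌈x⌉ - x) (x - ⌊x⌋)]))]
  have hC : ⌊α ^ 2 * n⌋ = k := by
    rw [show α ^ 2 * n = y ^ 2 / n by rw [hα]; field_simp]
    apply Int.floor_div_eq_of_mul_le_of_lt hn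
    · push_cast
      nlinarith
    · push_cast
      linarith [sq_lt_sq_add_of_lt_add_half hx hxn h1
        (h2.trans_le (by linarith [min_ceil_sub_sub_floor_le_half x]))]
  rw [f, hA, hB, hC]
  ring

theorem stmt19_general (k n : ℕ) (hkn : k < n) (α : ℝ)
    (h1 : Real.sqrt ((k : ℝ) / (n : ℝ)) ≤ α)
    (h2 : α < Real.sqrt ((k : ℝ) / (n : ℝ)) +
        (1 / (n : ℝ)) *
          min ((⌈Real.sqrt ((k : ℝ) * (n : ℝ))⌉ : ℝ) - Real.sqrt ((k : ℝ) * (n : ℝ)))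
              (Real.sqrt ((k : ℝ) * (n : ℝ)) - (⌊Real.sqrt ((k : ℝ) * (n : ℝ))⌋ : ℝ))) :
    f α n = 1 := by
  have hn : (0 : ℝ) < n := by exact_mod_cast (Nat.zero_le k).trans_lt hkn
  rw [Real.sqrt_div_eq_sqrt_mul_div _ hn.le] at h1 h2
  apply f_eq_one_of_sqrt_le_mul_lt hkn
  · rwa [div_le_iff₀ hn] at h1
  · rw [← lt_div_iff₀ hn]
    exact h2.trans_eq (by ring)

theorem stmt19 (k n : ℕ) (hk : 1 ≤ k) (hkn : k < n)
    (hirr : Irrational (Real.sqrt ((k : ℝ) / (n : ℝ)))) (α : ℝ)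
    (h1 : Real.sqrt ((k : ℝ) / (n : ℝ)) ≤ α)
    (h2 : α < Real.sqrt ((k : ℝ) / (n : ℝ)) +
        (1 / (n : ℝ)) *
          min ((⌈Real.sqrt ((k : ℝ) * (n : ℝ))⌉ : ℝ) - Real.sqrt ((k : ℝ) * (n : ℝ)))
              (Real.sqrt ((k : ℝ) * (n : ℝ)) - (⌊Real.sqrt ((k : ℝ) * (n : ℝ))⌋ : ℝ))) :
    f α n = 1 :=
  stmt19_general k n hkn α h1 h2
end
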